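/- arXiv:1808.03230 — 2 statements merged into one kernel-verified Lean document; each statement's English description precedes it below -/
import Mathlib

section
/- The second derivative of the negative log-density of the Gaussian mixture π_σ = ½𝒩(−1,σ²) + ½𝒩(1,σ²) satisfies: for all x ∈ (−∞, −10σ) (with σ ≤ 1/100), d²/dx² (−log f_σ(x)) ≥ 1/(8σ²). In particular, f_σ is strongly log-concave on (−∞, −10σ) with parameter at least 1/(8σ²). -/
/-!
Completing the square, `f_σ y = 2c · exp (-(y² + 1)/(2σ²)) · cosh (y/σ²)`, so `-log f_σ` is a
quadratic minus `log cosh (y/σ²)` and `(-log f_σ)'' x = 1/σ² - σ⁻⁴ / cosh² (x/σ²)`. Since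
`t² < cosh² t`, the correction term is below `1/x²`, which is at most `1/(100σ²)` when `|x| > 10σ`.
-/

open Real

namespace Real

theorem hasDerivAt_tanh (t : ℝ) : HasDerivAt tanh (1 / cosh t ^ 2) t := by
  have h : HasDerivAt (fun t => sinh t / cosh t) _ t :=
    (hasDerivAt_sinh t).div (hasDerivAt_cosh t) (cosh_pos t).ne'
  convert h using 1
  · exact funext tanh_eq_sinh_div_cosh
  · rw [← cosh_sq_sub_sinh_sq t]
    ring

theorem hasDerivAt_log_cosh (t : ℝ) : HasDerivAt (fun t => log (cosh t)) (tanh t) t := by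
  rw [tanh_eq_sinh_div_cosh]
  exact (hasDerivAt_cosh t).log (cosh_pos t).ne'

theorem deriv_deriv_quadratic_sub_log_cosh (K a b x : ℝ) :
    deriv (deriv fun y => K + a * y ^ 2 - log (cosh (b * y))) x =
      2 * a - b ^ 2 / cosh (b * x) ^ 2 := by
  have hlog (y : ℝ) : HasDerivAt (fun y => log (cosh (b * y))) (tanh (b * y) * b) y :=
    (hasDerivAt_log_cosh (b * y)).comp y ((hasDerivAt_id y).const_mul b |>.congr_deriv (mul_one b))
  have hfirst : deriv (fun y => K + a * y ^ 2 - log (cosh (b * y))) =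
      fun y => 2 * a * y - b * tanh (b * y) := by
    funext y
    refine (((hasDerivAt_pow 2 y).const_mul a).const_add K |>.sub (hlog y)).deriv.trans ?_
    ring
  have htanh : HasDerivAt (fun y => tanh (b * y)) (1 / cosh (b * x) ^ 2 * b) x :=
    (hasDerivAt_tanh (b * x)).comp x ((hasDerivAt_id x).const_mul b |>.congr_deriv (mul_one b))
  rw [hfirst]
  refine (((hasDerivAt_id x).const_mul (2 * a)).sub (htanh.const_mul b)).deriv.trans ?_
  ring

theorem sq_lt_cosh_sq (t : ℝ) : t ^ 2 < cosh t ^ 2 := by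
  have h : t ^ 2 ≤ sinh t ^ 2 :=
    sq_le_sq.2 (by rw [abs_sinh]; exact self_le_sinh_iff.2 (abs_nonneg t))
  rw [cosh_sq]
  linarith

theorem sq_div_cosh_mul_sq_lt (b : ℝ) {x : ℝ} (hx : x ≠ 0) :
    b ^ 2 / cosh (b * x) ^ 2 < 1 / x ^ 2 := by
  rw [div_lt_div_iff₀ (by positivity) (by positivity), one_mul, ← mul_pow]
  exact sq_lt_cosh_sq _

theorem exp_neg_sq_add_exp_neg_sq_eq_mul_cosh (x m v : ℝ) :
    exp (-(x + m) ^ 2 / (2 * v)) + exp (-(x - m) ^ 2 / (2 * v)) =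
      2 * exp (-(x ^ 2 + m ^ 2) / (2 * v)) * cosh (m * x / v) := by
  have hplus : -(x + m) ^ 2 / (2 * v) = -(x ^ 2 + m ^ 2) / (2 * v) + -(m * x / v) := by ring
  have hminus : -(x - m) ^ 2 / (2 * v) = -(x ^ 2 + m ^ 2) / (2 * v) + m * x / v := by ring
  rw [hplus, hminus, exp_add, exp_add, cosh_eq]
  ring

theorem neg_log_mul_gaussian_mixture (c m v y : ℝ) (hc : c ≠ 0) :
    -log (c * (exp (-(y + m) ^ 2 / (2 * v)) + exp (-(y - m) ^ 2 / (2 * v)))) =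
      (-log (2 * c) + m ^ 2 / (2 * v)) + 1 / (2 * v) * y ^ 2 - log (cosh (m / v * y)) := by
  rw [exp_neg_sq_add_exp_neg_sq_eq_mul_cosh, log_mul hc (by positivity),
    log_mul (by positivity) (cosh_pos _).ne', log_mul two_ne_zero (exp_pos _).ne', log_exp,
    log_mul two_ne_zero hc]
  ring_nf

end Real

theorem mixture_strong_logconcavity_general (σ : ℝ) (hσ : 0 < σ)
    (f : ℝ → ℝ)
    (hf : ∀ x : ℝ, f x =
      (1 / (2 * Real.sqrt (2 * Real.pi) * σ)) *
        (Real.exp (-(x + 1) ^ 2 / (2 * σ ^ 2)) + Real.exp (-(x - 1) ^ 2 / (2 * σ ^ 2)))) :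
    ∀ x : ℝ, x < -10 * σ →
      1 / (8 * σ ^ 2) ≤ deriv (deriv fun y => -Real.log (f y)) x := by
  intro x hx
  have hc : 1 / (2 * sqrt (2 * π) * σ) ≠ 0 := by positivity
  have hneg_log : (fun y => -log (f y)) = fun y =>
      (-log (2 * (1 / (2 * sqrt (2 * π) * σ))) + 1 ^ 2 / (2 * σ ^ 2)) +
        1 / (2 * σ ^ 2) * y ^ 2 - log (cosh (1 / σ ^ 2 * y)) :=
    funext fun y => by rw [hf y, neg_log_mul_gaussian_mixture _ _ _ _ hc]
  have hx_sq : 100 * σ ^ 2 < x ^ 2 := by nlinarith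
  have hcorrection : (1 / σ ^ 2) ^ 2 / cosh (1 / σ ^ 2 * x) ^ 2 < 1 / (100 * σ ^ 2) :=
    (sq_div_cosh_mul_sq_lt _ (by nlinarith)).trans (one_div_lt_one_div_of_lt (by positivity) hx_sq)
  have hmargin : 1 / (8 * σ ^ 2) + 1 / (100 * σ ^ 2) ≤ 2 * (1 / (2 * σ ^ 2)) := by
    field_simp
    norm_num
  rw [hneg_log, deriv_deriv_quadratic_sub_log_cosh]
  linarith

/-- For `σ ≤ 1/100`, the negative log-density of the mixture `½𝒩(−1,σ²) + ½𝒩(1,σ²)`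
satisfies `(−log f_σ)''(x) ≥ 1/(8σ²)` for all `x < −10σ`: `f_σ` is strongly log-concave
on `(−∞,−10σ)` with parameter at least `1/(8σ²)`. -/
theorem mixture_strong_logconcavity (σ : ℝ) (hσ : 0 < σ) (hσ' : σ ≤ 1 / 100)
    (f : ℝ → ℝ)
    (hf : ∀ x : ℝ, f x =
      (1 / (2 * Real.sqrt (2 * Real.pi) * σ)) *
        (Real.exp (-(x + 1) ^ 2 / (2 * σ ^ 2)) + Real.exp (-(x - 1) ^ 2 / (2 * σ ^ 2)))) :
    ∀ x : ℝ, x < -10 * σ →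
      1 / (8 * σ ^ 2) ≤ deriv (deriv fun y => -Real.log (f y)) x :=
  mixture_strong_logconcavity_general σ hσ f hf
end

section
/- Let K be a Markov kernel with stationary probability measure π on a measurable space, let S, U be measurable sets with π(S) ≥ 12ε, π(S) ≤ 1/2, π(S Δ U) ≤ 3ε and ε < π(S)/100. Define Φ(K, A) = (∫_A K(x, Aᶜ) π(dx))/π(A). Then Φ(K, U) ≤ (Φ(K, S) + 6ε/π(S))·(1 + 6ε/π(S)). -/
/-!
Moving from `S` to `U` changes the flow out of the set by at most `π(S ∆ U)`: the extra
outflow from `U` either starts in `U \ S`, which has mass at most `π(U \ S)`, or lands in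
`S \ U`, which by stationarity is hit with probability at most `π(S \ U)`. The mass of the set
changes by at most `π(S ∆ U)` as well, and with `π(S ∆ U) ≤ 3ε ≤ π(S)/4` the two perturbations
fit inside the factors `1 + 6ε/π(S)`.
-/

open MeasureTheory ProbabilityTheory
open scoped symmDiff

namespace ProbabilityTheory.Kernel

variable {α : Type*} [MeasurableSpace α] {K : Kernel α α} {π : Measure α}

lemma setLIntegral_le_of_bind_eq (hstat : π.bind (fun x => K x) = π) {B : Set α}
    (hB : MeasurableSet B) (A : Set α) :
    ∫⁻ x in A, K x B ∂π ≤ π B :=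
  calc ∫⁻ x in A, K x B ∂π ≤ ∫⁻ x, K x B ∂π := setLIntegral_le_lintegral _ _
    _ = π.bind (fun x => K x) B := (Measure.bind_apply hB K.measurable.aemeasurable).symm
    _ = π B := by rw [hstat]

lemma setLIntegral_le_measure [IsMarkovKernel K] (A B : Set α) :
    ∫⁻ x in A, K x B ∂π ≤ π A :=
  calc ∫⁻ x in A, K x B ∂π ≤ ∫⁻ _ in A, 1 ∂π := lintegral_mono fun _ => prob_le_one
    _ = π A := setLIntegral_one A

lemma setLIntegral_compl_le_add_symmDiff [IsMarkovKernel K]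
    (hstat : π.bind (fun x => K x) = π) {S U : Set α} (hS : MeasurableSet S)
    (hU : MeasurableSet U) :
    ∫⁻ x in U, K x Uᶜ ∂π ≤ ∫⁻ x in S, K x Sᶜ ∂π + π (S ∆ U) := by
  have hexit : ∀ x, K x Uᶜ ≤ K x Sᶜ + K x (S \ U) := fun x =>
    (measure_mono fun y hy => (em (y ∈ S)).symm.imp id (⟨·, hy⟩)).trans
      (measure_union_le _ _)
  calc ∫⁻ x in U, K x Uᶜ ∂π
      ≤ ∫⁻ x in U, K x Sᶜ + K x (S \ U) ∂π := lintegral_mono hexit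
    _ = ∫⁻ x in U, K x Sᶜ ∂π + ∫⁻ x in U, K x (S \ U) ∂π :=
        lintegral_add_left (K.measurable_coe hS.compl) _
    _ ≤ (∫⁻ x in S, K x Sᶜ ∂π + ∫⁻ x in U \ S, K x Sᶜ ∂π) + π (S \ U) := by
        gcongr
        · exact (lintegral_mono_set fun y hy => (em (y ∈ S)).imp id (⟨hy, ·⟩)).trans
            (lintegral_union_le _ _ _)
        · exact setLIntegral_le_of_bind_eq hstat (hS.diff hU) U
    _ ≤ (∫⁻ x in S, K x Sᶜ ∂π + π (U \ S)) + π (S \ U) := by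
        gcongr
        exact setLIntegral_le_measure _ _
    _ = ∫⁻ x in S, K x Sᶜ ∂π + π (S ∆ U) := by
        rw [measure_symmDiff_eq hS.nullMeasurableSet hU.nullMeasurableSet, add_comm (π (S \ U)),
          add_assoc]

lemma setIntegral_toReal_compl_le_add_symmDiff [IsMarkovKernel K] [IsFiniteMeasure π]
    (hstat : π.bind (fun x => K x) = π) {S U : Set α} (hS : MeasurableSet S)
    (hU : MeasurableSet U) :
    ∫ x in U, (K x Uᶜ).toReal ∂π ≤ ∫ x in S, (K x Sᶜ).toReal ∂π + π.real (S ∆ U) := by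
  have hfinite : ∫⁻ x in S, K x Sᶜ ∂π ≠ ⊤ :=
    ne_top_of_le_ne_top (measure_ne_top π S) (setLIntegral_le_measure S Sᶜ)
  have hlintegral {A : Set α} (hA : MeasurableSet A) :
      ∫ x in A, (K x Aᶜ).toReal ∂π = (∫⁻ x in A, K x Aᶜ ∂π).toReal :=
    integral_toReal (K.measurable_coe hA.compl).aemeasurable
      (ae_of_all _ fun _ => measure_lt_top _ _)
  rw [hlintegral hU, hlintegral hS, measureReal_def,
    ← ENNReal.toReal_add hfinite (measure_ne_top _ _)]
  exact ENNReal.toReal_mono (ENNReal.add_ne_top.2 ⟨hfinite, measure_ne_top _ _⟩)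
    (setLIntegral_compl_le_add_symmDiff hstat hS hU)

end ProbabilityTheory.Kernel

lemma div_le_perturbed_ratio {a b s u d ε : ℝ} (hflow : a ≤ b + d) (hmass : s ≤ u + d)
    (hd : d ≤ 3 * ε) (hε : 0 < ε) (hs : 12 * ε ≤ s) (hb : 0 ≤ b) :
    a / u ≤ (b / s + 6 * ε / s) * (1 + 6 * ε / s) := by
  have hs0 : 0 < s := by linarith
  have hs3 : 0 < s - 3 * ε := by linarith
  calc a / u ≤ (b + 3 * ε) / (s - 3 * ε) :=
        div_le_div₀ (by linarith) (by linarith) hs3 (by linarith)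
    _ ≤ (b + 6 * ε) * (s + 6 * ε) / (s * s) := by
        rw [div_le_div_iff₀ hs3 (by positivity)]
        -- the difference of the two sides is `3ε (b (s - 6ε) + s² + 6εs - 36ε²)`
        nlinarith [mul_nonneg (mul_nonneg hε.le hb) (by linarith : (0 : ℝ) ≤ s - 6 * ε),
          mul_nonneg hε.le (mul_nonneg hs0.le (by linarith : (0 : ℝ) ≤ s - 12 * ε)),
          mul_pos hε hε]
    _ = (b / s + 6 * ε / s) * (1 + 6 * ε / s) := by
        field_simp

theorem conductance_set_perturbation_general {α : Type*} [MeasurableSpace α]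
    (K : Kernel α α) [IsMarkovKernel K]
    (π : Measure α) [IsProbabilityMeasure π]
    (hstat : π.bind (fun x => K x) = π)
    (S U : Set α) (hSm : MeasurableSet S) (hUm : MeasurableSet U)
    (ε : ℝ) (hε : 0 < ε)
    (hS12 : 12 * ε ≤ (π S).toReal)
    (hSU : (π (symmDiff S U)).toReal ≤ 3 * ε) :
    (∫ x in U, (K x Uᶜ).toReal ∂π) / (π U).toReal ≤
      ((∫ x in S, (K x Sᶜ).toReal ∂π) / (π S).toReal + 6 * ε / (π S).toReal) *
        (1 + 6 * ε / (π S).toReal) := by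
  have hmass : π.real S ≤ π.real U + π.real (S ∆ U) := by
    have := abs_measureReal_sub_le_measureReal_symmDiff hSm.nullMeasurableSet
      hUm.nullMeasurableSet (μ := π)
    linarith [le_abs_self (π.real S - π.real U)]
  exact div_le_perturbed_ratio (Kernel.setIntegral_toReal_compl_le_add_symmDiff hstat hSm hUm)
    hmass hSU hε hS12 (integral_nonneg fun _ => ENNReal.toReal_nonneg)

/-- Conductance comparison for nearby sets: if `π(SΔU) ≤ 3ε`, `π(S) ≥ 12ε`,
`π(S) ≤ 1/2` and `ε < π(S)/100`, then
`Φ(K,U) ≤ (Φ(K,S) + 6ε/π(S))·(1 + 6ε/π(S))`, where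
`Φ(K,A) = (∫_A K(x,Aᶜ) dπ)/π(A)`. -/
theorem conductance_set_perturbation {α : Type*} [MeasurableSpace α]
    (K : Kernel α α) [IsMarkovKernel K]
    (π : Measure α) [IsProbabilityMeasure π]
    (hstat : π.bind (fun x => K x) = π)
    (S U : Set α) (hSm : MeasurableSet S) (hUm : MeasurableSet U)
    (ε : ℝ) (hε : 0 < ε)
    (hS12 : 12 * ε ≤ (π S).toReal) (hShalf : (π S).toReal ≤ 1 / 2)
    (hSU : (π (symmDiff S U)).toReal ≤ 3 * ε) (hε' : ε < (π S).toReal / 100) :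
    (∫ x in U, (K x Uᶜ).toReal ∂π) / (π U).toReal ≤
      ((∫ x in S, (K x Sᶜ).toReal ∂π) / (π S).toReal + 6 * ε / (π S).toReal) *
        (1 + 6 * ε / (π S).toReal) :=
  conductance_set_perturbation_general K π hstat S U hSm hUm ε hε hS12 hSU
end
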